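/- Let ss_n be the number of super Schröder paths of order n, and hs_n be the total number of humps in all Schröder paths of order n. Then ss_n = 2·hs_n + 1. -/

import Mathlib

inductive SStep | U | F | D
deriving DecidableEq

/-- A super Schröder path of order `n`. -/
def IsSuperSchroeder (n : ℕ) (w : List SStep) : Prop :=
  w.count SStep.U + w.count SStep.F = n ∧ w.count SStep.U = w.count SStep.D

/-- A Schröder path of order `n`: additionally never goes below the diagonal. -/
def IsSchroeder (n : ℕ) (w : List SStep) : Prop :=
  IsSuperSchroeder n w ∧ ∀ p, p <+: w → p.count SStep.D ≤ p.count SStep.U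

def IsHumpAt (w : List SStep) (i : ℕ) : Prop :=
  ∃ k, w[i]? = some SStep.U ∧ (∀ j < k, w[i + 1 + j]? = some SStep.F) ∧
    w[i + 1 + k]? = some SStep.D

/-!
A nonflat super Schröder path leaves the diagonal for the first time either upwards or
downwards, and swapping `U` and `D` exchanges the two kinds; the flat path `F^n` accounts for
the `+ 1`. The paths `F^a U E D r` leaving upwards, cut at the first return `E` of the first
excursion, are matched recursively with Schröder paths carrying a marked hump:
`F^a U F^m D E` with its first hump when `r = F^m`, `F^a U E D Q` with the hump of `Q` when `r`
leaves upwards and is matched with `Q`, and `F^a U Q D E` when the mirror image of `r` is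
matched with `Q`. Conversely the position of the marked hump of a Schröder path `F^a U C D T`,
at the first `U`, inside `C` or inside `T`, tells which case it came from.
-/

namespace SStep

def reflect : SStep → SStep
  | U => D
  | F => F
  | D => U

@[simp] theorem reflect_reflect (a : SStep) : a.reflect.reflect = a := by
  cases a <;> rfl

instance : Fintype SStep := ⟨{U, F, D}, fun a => by cases a <;> simp⟩

end SStep

namespace Schroeder

open SStep List

def mirror (w : List SStep) : List SStep := w.map reflect

@[simp] theorem mirror_nil : mirror [] = [] := rfl

@[simp] theorem mirror_cons (a : SStep) (w : List SStep) :
    mirror (a :: w) = a.reflect :: mirror w :=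
  rfl

@[simp] theorem mirror_mirror (w : List SStep) : mirror (mirror w) = w := by
  induction w <;> simp_all

@[simp] theorem length_mirror (w : List SStep) : (mirror w).length = w.length := length_map ..

@[simp] theorem count_mirror (a : SStep) (w : List SStep) :
    (mirror w).count a = w.count a.reflect := by
  induction w with
  | nil => rfl
  | cons b w ih => cases a <;> cases b <;> simp_all [reflect]

theorem length_eq_count_add (w : List SStep) : w.length = w.count U + w.count D + w.count F := by
  induction w with
  | nil => rfl
  | cons a w ih => cases a <;> simp [ih] <;> omega

def order (w : List SStep) : ℕ := w.count U + w.count F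

def IsBalanced (w : List SStep) : Prop := w.count U = w.count D

def StaysAbove (h : ℕ) (w : List SStep) : Prop := ∀ p, p <+: w → p.count D ≤ p.count U + h

theorem isSuperSchroeder_iff {n : ℕ} {w : List SStep} :
    IsSuperSchroeder n w ↔ IsBalanced w ∧ order w = n :=
  and_comm

theorem isSchroeder_iff {n : ℕ} {w : List SStep} :
    IsSchroeder n w ↔ (IsBalanced w ∧ order w = n) ∧ StaysAbove 0 w := by
  simp [IsSchroeder, isSuperSchroeder_iff, StaysAbove]

@[simp] theorem isBalanced_mirror {w : List SStep} : IsBalanced (mirror w) ↔ IsBalanced w := by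
  simp [IsBalanced, reflect, eq_comm]

theorem IsBalanced.cons_U_append_D {X Y : List SStep} (hX : IsBalanced X) (hY : IsBalanced Y) :
    IsBalanced (U :: (X ++ D :: Y)) := by
  simp_all [IsBalanced]
  omega

theorem order_mirror {w : List SStep} (hw : IsBalanced w) : order (mirror w) = order w := by
  simp_all [IsBalanced, order, reflect]

section StaysAbove

variable {h : ℕ} {w : List SStep}

theorem staysAbove_cons {a : SStep} :
    StaysAbove h (a :: w) ↔ ∀ p, p <+: w → (a :: p).count D ≤ (a :: p).count U + h := by
  simp only [StaysAbove, prefix_cons_iff]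
  refine ⟨fun H p hp => H _ (.inr ⟨p, rfl, hp⟩), ?_⟩
  rintro H _ (rfl | ⟨p, rfl, hp⟩)
  exacts [by simp, H p hp]

theorem staysAbove_cons_U : StaysAbove h (U :: w) ↔ StaysAbove (h + 1) w :=
  staysAbove_cons.trans <| forall₂_congr fun p _ => by simp; omega

theorem staysAbove_cons_F : StaysAbove h (F :: w) ↔ StaysAbove h w :=
  staysAbove_cons.trans <| forall₂_congr fun p _ => by simp

theorem staysAbove_succ_cons_D : StaysAbove (h + 1) (D :: w) ↔ StaysAbove h w :=
  staysAbove_cons.trans <| forall₂_congr fun p _ => by simp; omega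

theorem not_staysAbove_zero_cons_D : ¬ StaysAbove 0 (D :: w) :=
  fun H => by simpa using H [D] (by simp)

theorem StaysAbove.mono {h' : ℕ} (hw : StaysAbove h w) (hh : h ≤ h') : StaysAbove h' w :=
  fun p hp => (hw p hp).trans (by omega)

theorem staysAbove_replicate_F (k : ℕ) : StaysAbove h (replicate k F) :=
  fun p hp => by have := hp.count_le D; simp [count_replicate] at this; omega

theorem staysAbove_append {X : List SStep} (hX : IsBalanced X) :
    StaysAbove h (X ++ w) ↔ StaysAbove h X ∧ StaysAbove h w := by
  refine ⟨fun H => ⟨fun p hp => H p (hp.trans (prefix_append X w)), fun q hq => ?_⟩, ?_⟩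
  · have := H (X ++ q) ((prefix_append_right_inj X).2 hq)
    simp only [IsBalanced, count_append] at hX this
    omega
  · rintro ⟨HX, Hw⟩ p hp
    rcases prefix_or_prefix_of_prefix hp (prefix_append X w) with hpX | ⟨q, rfl⟩
    · exact HX p hpX
    · have := Hw q ((prefix_append_right_inj X).1 hp)
      simp only [IsBalanced, count_append] at hX this ⊢
      omega

theorem staysAbove_zero_cons_U_append_D {X : List SStep} (hX : IsBalanced X) :
    StaysAbove 0 (U :: (X ++ D :: w)) ↔ StaysAbove 1 X ∧ StaysAbove 0 w := by
  rw [staysAbove_cons_U, staysAbove_append hX, staysAbove_succ_cons_D]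

theorem not_staysAbove_zero_replicate_F_append_D (k : ℕ) (B : List SStep) :
    ¬ StaysAbove 0 (replicate k F ++ D :: B) := by
  induction k with
  | zero => exact not_staysAbove_zero_cons_D
  | succ k ih => simpa [replicate_succ, staysAbove_cons_F] using ih

theorem StaysAbove.ne_append_U_replicate_F {C : List SStep} (hC : StaysAbove 0 C)
    (hCb : IsBalanced C) (A : List SStep) (k : ℕ) : C ≠ A ++ U :: replicate k F := by
  rintro rfl
  have := hC A (prefix_append _ _)
  simp [IsBalanced, count_replicate] at hCb this
  omega

end StaysAbove

/-- The position of the first step of `t` that takes it from `h` to `h + 1` levels below its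
start (junk if there is none). -/
def firstPassage : ℕ → List SStep → ℕ
  | _, [] => 0
  | 0, D :: _ => 0
  | h + 1, D :: t => firstPassage h t + 1
  | h, U :: t => firstPassage (h + 1) t + 1
  | h, F :: t => firstPassage h t + 1

theorem firstPassage_append {h : ℕ} {C : List SStep} (hC : StaysAbove h C)
    (hCb : C.count D = C.count U + h) (T : List SStep) :
    firstPassage h (C ++ D :: T) = C.length := by
  induction C generalizing h with
  | nil =>
    simp only [length_nil, count_nil, zero_add] at hCb ⊢
    subst hCb
    rfl
  | cons a C ih =>
    cases a with
    | U => simp [firstPassage, ih (staysAbove_cons_U.1 hC) (by simp at hCb; omega)]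
    | F => simp [firstPassage, ih (staysAbove_cons_F.1 hC) (by simpa using hCb)]
    | D =>
      obtain ⟨h, rfl⟩ : ∃ h', h = h' + 1 := Nat.exists_eq_add_one.2 <|
        Nat.pos_of_ne_zero (by rintro rfl; exact not_staysAbove_zero_cons_D hC)
      simp [firstPassage, ih (staysAbove_succ_cons_D.1 hC) (by simp at hCb; omega)]

theorem exists_firstPassage {h : ℕ} {t : List SStep} (ht : t.count U + h < t.count D) :
    ∃ C T, t = C ++ D :: T ∧ StaysAbove h C ∧ C.count D = C.count U + h := by
  induction t generalizing h with
  | nil => simp at ht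
  | cons a t ih =>
    cases a with
    | U =>
      obtain ⟨C, T, rfl, hC, hCb⟩ := ih (h := h + 1) (by simp at ht; omega)
      exact ⟨U :: C, T, rfl, staysAbove_cons_U.2 hC, by simp; omega⟩
    | F =>
      obtain ⟨C, T, rfl, hC, hCb⟩ := ih (h := h) (by simpa using ht)
      exact ⟨F :: C, T, rfl, staysAbove_cons_F.2 hC, by simpa using hCb⟩
    | D =>
      rcases h with _ | h
      · exact ⟨[], t, rfl, fun p hp => by simp [prefix_nil.1 hp], rfl⟩
      obtain ⟨C, T, rfl, hC, hCb⟩ := ih (h := h) (by simp at ht; omega)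
      exact ⟨D :: C, T, rfl, staysAbove_succ_cons_D.2 hC, by simp; omega⟩

/-- For a path `U :: t`, the decomposition `t = E ++ D :: r` at its first return to level 0. -/
def firstReturn (t : List SStep) : List SStep × List SStep :=
  (t.take (firstPassage 0 t), t.drop (firstPassage 0 t + 1))

theorem firstReturn_append {C : List SStep} (hC : StaysAbove 0 C) (hCb : IsBalanced C)
    (T : List SStep) : firstReturn (C ++ D :: T) = (C, T) := by
  simp [firstReturn, firstPassage_append hC hCb.symm]

theorem exists_firstReturn {t : List SStep} (ht : IsBalanced (U :: t)) :
    ∃ E r, t = E ++ D :: r ∧ StaysAbove 0 E ∧ IsBalanced E ∧ IsBalanced r := by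
  obtain ⟨E, r, rfl, hE, hEb⟩ := exists_firstPassage (h := 0) (t := t)
    (by simp [IsBalanced] at ht; omega)
  refine ⟨E, r, rfl, hE, hEb.symm, ?_⟩
  simp [IsBalanced] at ht hEb ⊢
  omega

def HasHumpAt (P : List SStep) (i : ℕ) : Prop :=
  ∃ A k B, P = A ++ U :: (replicate k F ++ D :: B) ∧ A.length = i

section Humps

variable {P : List SStep} {i : ℕ}

theorem isHumpAt_iff_prefix_drop :
    IsHumpAt P i ↔ ∃ k, U :: (replicate k F ++ [D]) <+: P.drop i := by
  simp only [IsHumpAt, prefix_iff_getElem?, getElem?_drop]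
  refine exists_congr fun k =>
    ⟨fun ⟨hU, hF, hD⟩ j hj => ?_, fun h => ⟨?_, fun j hj => ?_, ?_⟩⟩
  · rcases j with _ | j
    · simpa using hU
    · rcases (by simp at hj; omega : j < k ∨ j = k) with hj | rfl
      · simpa [getElem_append, hj, Nat.add_right_comm, Nat.add_assoc] using hF j hj
      · simpa [Nat.add_right_comm, Nat.add_assoc] using hD
  · simpa using h 0 (by simp)
  · rw [show i + 1 + j = i + (j + 1) by omega, h (j + 1) (by simp; omega)]
    simp [hj]
  · rw [show i + 1 + k = i + (k + 1) by omega, h (k + 1) (by simp)]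
    simp

theorem isHumpAt_iff_hasHumpAt : IsHumpAt P i ↔ HasHumpAt P i := by
  rw [isHumpAt_iff_prefix_drop]
  constructor
  · rintro ⟨k, B, hB⟩
    have hi : i ≤ P.length := by
      by_contra hi
      rw [drop_eq_nil_of_le (by omega)] at hB
      simp at hB
    refine ⟨P.take i, k, B, ?_, by simp [hi]⟩
    conv_lhs => rw [← take_append_drop i P, ← hB]
    simp
  · rintro ⟨A, k, B, rfl, rfl⟩
    exact ⟨k, B, by simp⟩

theorem hasHumpAt_cons_U_replicate_F (k : ℕ) (B : List SStep) :
    HasHumpAt (U :: (replicate k F ++ D :: B)) 0 :=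
  ⟨[], k, B, rfl, rfl⟩

theorem HasHumpAt.cons (a : SStep) (hP : HasHumpAt P i) : HasHumpAt (a :: P) (i + 1) := by
  obtain ⟨A, k, B, rfl, rfl⟩ := hP
  exact ⟨a :: A, k, B, rfl, rfl⟩

theorem HasHumpAt.append_left (hP : HasHumpAt P i) (Q : List SStep) : HasHumpAt (P ++ Q) i := by
  obtain ⟨A, k, B, rfl, rfl⟩ := hP
  exact ⟨A, k, B ++ Q, by simp, rfl⟩

theorem HasHumpAt.append_right (hP : HasHumpAt P i) (Q : List SStep) :
    HasHumpAt (Q ++ P) (Q.length + i) := by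
  obtain ⟨A, k, B, rfl, rfl⟩ := hP
  exact ⟨Q ++ A, k, B, by simp, by simp⟩

theorem HasHumpAt.lt_length (hP : HasHumpAt P i) : i < P.length := by
  obtain ⟨A, k, B, rfl, rfl⟩ := hP
  simp

theorem HasHumpAt.of_cons_F (hP : HasHumpAt (F :: P) i) : ∃ j, i = j + 1 ∧ HasHumpAt P j := by
  obtain ⟨_ | ⟨a, A⟩, k, B, hA, rfl⟩ := hP
  · simp at hA
  · simp only [cons_append, cons.injEq] at hA
    exact ⟨A.length, rfl, A, k, B, hA.2, rfl⟩

theorem replicate_F_append_D_eq_append_D {k : ℕ} {B C T : List SStep}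
    (h : replicate k F ++ D :: B = C ++ D :: T) :
    (C = replicate k F ∧ B = T) ∨
      ∃ C', C = replicate k F ++ D :: C' ∧ B = C' ++ D :: T := by
  induction k generalizing C with
  | zero =>
    rcases C with _ | ⟨a, C⟩
    · simp_all
    · simp only [replicate_zero, nil_append, cons_append, cons.injEq] at h
      exact .inr ⟨C, by simp [← h.1], h.2⟩
  | succ k ih =>
    rcases C with _ | ⟨a, C⟩
    · simp [replicate_succ] at h
    · simp only [replicate_succ, cons_append, cons.injEq] at h
      obtain ⟨rfl, h⟩ := h
      simpa [replicate_succ] using ih h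

theorem HasHumpAt.cases_of_cons_U_append_D {C T : List SStep} (hC : StaysAbove 0 C)
    (hCb : IsBalanced C) (hP : HasHumpAt (U :: (C ++ D :: T)) i) :
    (i = 0 ∧ C = replicate C.length F) ∨ (∃ j, i = j + 1 ∧ HasHumpAt C j) ∨
      ∃ j, i = C.length + 2 + j ∧ HasHumpAt T j := by
  obtain ⟨_ | ⟨a, A⟩, k, B, hA, rfl⟩ := hP
  · simp only [nil_append, cons.injEq, true_and] at hA
    rcases replicate_F_append_D_eq_append_D hA.symm with ⟨rfl, -⟩ | ⟨C', rfl, -⟩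
    · simp
    · exact absurd hC (not_staysAbove_zero_replicate_F_append_D _ _)
  · simp only [cons_append, cons.injEq] at hA
    obtain ⟨rfl, hA⟩ := hA
    rcases append_eq_append_iff.1 hA with
      ⟨_ | ⟨x, a'⟩, rfl, hT⟩ | ⟨_ | ⟨x, c'⟩, rfl, hc⟩
    · simp at hT
    · simp only [cons_append, cons.injEq] at hT
      obtain ⟨rfl, rfl⟩ := hT
      exact .inr (.inr ⟨a'.length, by simp; omega, a', k, B, rfl, rfl⟩)
    · simp at hc
    · simp only [cons_append, cons.injEq] at hc
      obtain ⟨rfl, hc⟩ := hc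
      rcases replicate_F_append_D_eq_append_D hc with ⟨rfl, -⟩ | ⟨C', rfl, -⟩
      · exact absurd rfl (hC.ne_append_U_replicate_F hCb A k)
      · exact .inr (.inl ⟨A.length, by simp, A, k, C', by simp, rfl⟩)

end Humps

def IsHumpMarked (P : List SStep) (i : ℕ) : Prop :=
  IsBalanced P ∧ StaysAbove 0 P ∧ HasHumpAt P i

theorem isSchroeder_and_isHumpAt_iff {n : ℕ} {P : List SStep} {i : ℕ} :
    IsSchroeder n P ∧ IsHumpAt P i ↔ IsHumpMarked P i ∧ order P = n := by
  rw [isSchroeder_iff, isHumpAt_iff_hasHumpAt, IsHumpMarked]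
  tauto

/-- The marked Schröder path assigned to `U E D r`, given the value of `toMarked` at `r`. -/
def assemble (E r : List SStep) : Option ((List SStep × ℕ) × Bool) → List SStep × ℕ
  | none => (U :: (replicate r.length F ++ D :: E), 0)
  | some ((Q, j), false) => (U :: (E ++ D :: Q), E.length + 2 + j)
  | some ((Q, j), true) => (U :: (Q ++ D :: E), j + 1)

/-- On balanced paths: `none` on flat paths, and otherwise a Schröder path with a marked hump
together with a flag that is `true` iff the first nonflat step is `D`. -/
def toMarked : List SStep → Option ((List SStep × ℕ) × Bool)
  | [] => none
  | F :: t => (toMarked t).map fun x => ((F :: x.1.1, x.1.2 + 1), x.2)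
  | U :: t =>
    some (assemble (firstReturn t).1 (firstReturn t).2 (toMarked (firstReturn t).2), false)
  | D :: t =>
    some (assemble (firstReturn (mirror t)).1 (firstReturn (mirror t)).2
      (toMarked (firstReturn (mirror t)).2), true)
termination_by w => w.length
decreasing_by all_goals simp [firstReturn]

def ofMarked : List SStep → ℕ → List SStep
  | F :: P, i => F :: ofMarked P (i - 1)
  | U :: P, i =>
    if i = 0 then U :: ((firstReturn P).2 ++ D :: (firstReturn P).1)
    else if i ≤ (firstReturn P).1.length then
      U :: ((firstReturn P).2 ++ D :: mirror (ofMarked (firstReturn P).1 (i - 1)))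
    else
      U :: ((firstReturn P).1 ++ D ::
        ofMarked (firstReturn P).2 (i - (firstReturn P).1.length - 2))
  | _, _ => []
termination_by P => P.length
decreasing_by all_goals simp [firstReturn]

def mirrorIf : Bool → List SStep → List SStep
  | false, w => w
  | true, w => mirror w

@[simp] theorem mirrorIf_false (w : List SStep) : mirrorIf false w = w := rfl
@[simp] theorem mirrorIf_true (w : List SStep) : mirrorIf true w = mirror w := rfl

theorem mirrorIf_cons_F (ε : Bool) (w : List SStep) :
    mirrorIf ε (F :: w) = F :: mirrorIf ε w := by
  cases ε <;> simp [reflect]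

theorem mirrorIf_not (ε : Bool) (w : List SStep) : mirrorIf (!ε) w = mirror (mirrorIf ε w) := by
  cases ε <;> simp

theorem toMarked_cons_F (t : List SStep) :
    toMarked (F :: t) = (toMarked t).map fun x => ((F :: x.1.1, x.1.2 + 1), x.2) := by
  rw [toMarked]

theorem toMarked_cons_U_append_D {E : List SStep} (hE : StaysAbove 0 E) (hEb : IsBalanced E)
    (r : List SStep) : toMarked (U :: (E ++ D :: r)) = some (assemble E r (toMarked r), false) := by
  rw [toMarked, firstReturn_append hE hEb]

theorem toMarked_cons_D (t : List SStep) :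
    toMarked (D :: t) = (toMarked (U :: mirror t)).map fun x => (x.1, !x.2) := by
  rw [toMarked, toMarked]
  rfl

theorem toMarked_mirror (w : List SStep) :
    toMarked (mirror w) = (toMarked w).map fun x => (x.1, !x.2) := by
  induction w with
  | nil => simp [toMarked]
  | cons a t ih =>
    cases a with
    | U => simp [reflect, toMarked_cons_D]
    | F => simp [reflect, toMarked_cons_F, ih, Option.map_map, Function.comp_def]
    | D => simp [reflect, toMarked_cons_D, Option.map_map, Function.comp_def]

theorem toMarked_eq_none_iff {w : List SStep} : toMarked w = none ↔ w = replicate w.length F := by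
  induction w with
  | nil => simp [toMarked]
  | cons a t ih =>
    cases a with
    | U => simp [toMarked, replicate_succ]
    | F => simp [toMarked_cons_F, ih, replicate_succ]
    | D => simp [toMarked, replicate_succ]

theorem ofMarked_cons_F (P : List SStep) (i : ℕ) :
    ofMarked (F :: P) i = F :: ofMarked P (i - 1) := by
  rw [ofMarked]

theorem ofMarked_cons_U_append_D {C : List SStep} (hC : StaysAbove 0 C) (hCb : IsBalanced C)
    (T : List SStep) (i : ℕ) :
    ofMarked (U :: (C ++ D :: T)) i =
      if i = 0 then U :: (T ++ D :: C)
      else if i ≤ C.length then U :: (T ++ D :: mirror (ofMarked C (i - 1)))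
      else U :: (C ++ D :: ofMarked T (i - C.length - 2)) := by
  rw [ofMarked, firstReturn_append hC hCb]

theorem isHumpMarked_assemble {E r : List SStep} (hE : StaysAbove 0 E) (hEb : IsBalanced E)
    (ih : ∀ Q j ε, toMarked r = some ((Q, j), ε) → IsHumpMarked Q j ∧ order Q = order r) :
    IsHumpMarked (assemble E r (toMarked r)).1 (assemble E r (toMarked r)).2 ∧
      order (assemble E r (toMarked r)).1 = order (U :: (E ++ D :: r)) := by
  rcases h : toMarked r with _ | ⟨⟨Q, j⟩, _ | _⟩
  all_goals dsimp only [assemble]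
  · obtain ⟨m, rfl⟩ : ∃ m, r = replicate m F := ⟨_, toMarked_eq_none_iff.1 h⟩
    have hF : IsBalanced (replicate m F) := by simp [IsBalanced, count_replicate]
    rw [length_replicate]
    refine ⟨⟨hF.cons_U_append_D hEb, ?_, hasHumpAt_cons_U_replicate_F _ _⟩, ?_⟩
    · exact (staysAbove_zero_cons_U_append_D hF).2 ⟨staysAbove_replicate_F m, hE⟩
    · simp [order, count_replicate]
      omega
  · obtain ⟨⟨hQb, hQ, hQh⟩, hQo⟩ := ih Q j false h
    refine ⟨⟨hEb.cons_U_append_D hQb, ?_, ?_⟩, ?_⟩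
    · exact (staysAbove_zero_cons_U_append_D hEb).2 ⟨hE.mono (Nat.zero_le 1), hQ⟩
    · rw [show E.length + 2 + j = (U :: (E ++ [D])).length + j by simp]
      simpa using hQh.append_right (U :: (E ++ [D]))
    · simp [order] at hQo ⊢
      omega
  · obtain ⟨⟨hQb, hQ, hQh⟩, hQo⟩ := ih Q j true h
    refine ⟨⟨hQb.cons_U_append_D hEb, ?_, (hQh.append_left _).cons U⟩, ?_⟩
    · exact (staysAbove_zero_cons_U_append_D hQb).2 ⟨hQ.mono (Nat.zero_le 1), hE⟩
    · simp [order] at hQo ⊢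
      omega

theorem isHumpMarked_of_toMarked_eq_some {w : List SStep} (hw : IsBalanced w) {P : List SStep}
    {i : ℕ} {ε : Bool} (h : toMarked w = some ((P, i), ε)) :
    IsHumpMarked P i ∧ order P = order w := by
  induction hn : w.length using Nat.strong_induction_on generalizing w P i ε with
  | _ n ih =>
  have hU : ∀ t, (U :: t).length = n → IsBalanced (U :: t) → ∀ {P i ε},
      toMarked (U :: t) = some ((P, i), ε) → IsHumpMarked P i ∧ order P = order (U :: t) := by
    intro t ht hb P i ε h
    obtain ⟨E, r, rfl, hE, hEb, hr⟩ := exists_firstReturn hb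
    rw [toMarked_cons_U_append_D hE hEb] at h
    have hPi : assemble E r (toMarked r) = (P, i) := congrArg Prod.fst (Option.some.inj h)
    simpa [hPi] using isHumpMarked_assemble hE hEb
      fun Q j ε hQ => ih r.length (by simp at ht; omega) hr hQ rfl
  rcases w with _ | ⟨_ | _ | _, t⟩
  · simp [toMarked] at h
  · exact hU t hn hw h
  · rw [toMarked_cons_F] at h
    obtain ⟨⟨⟨P', i'⟩, ε'⟩, h', hx⟩ := Option.map_eq_some_iff.1 h
    simp only [Prod.mk.injEq] at hx
    obtain ⟨⟨rfl, rfl⟩, rfl⟩ := hx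
    obtain ⟨⟨hb, hs, hh⟩, ho⟩ :=
      ih t.length (by simp at hn; omega) (by simpa [IsBalanced] using hw) h' rfl
    refine ⟨⟨by simpa [IsBalanced] using hb, staysAbove_cons_F.2 hs, hh.cons F⟩, ?_⟩
    simp [order] at ho ⊢
    omega
  · have e : U :: mirror t = mirror (D :: t) := by simp [reflect]
    rw [toMarked_cons_D] at h
    obtain ⟨⟨x, ε'⟩, h', hx⟩ := Option.map_eq_some_iff.1 h
    simp only [Prod.mk.injEq] at hx
    obtain ⟨rfl, -⟩ := hx
    have := hU (mirror t) (by simpa using hn) (by rw [e]; exact isBalanced_mirror.2 hw) h'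
    rwa [e, order_mirror hw] at this

theorem ofMarked_assemble {E r : List SStep} (hE : StaysAbove 0 E) (hEb : IsBalanced E)
    (hr : IsBalanced r)
    (ih : ∀ Q j ε, toMarked r = some ((Q, j), ε) → mirrorIf ε (ofMarked Q j) = r) :
    ofMarked (assemble E r (toMarked r)).1 (assemble E r (toMarked r)).2 = U :: (E ++ D :: r) := by
  rcases h : toMarked r with _ | ⟨⟨Q, j⟩, _ | _⟩
  all_goals dsimp only [assemble]
  · obtain ⟨m, rfl⟩ : ∃ m, r = replicate m F := ⟨_, toMarked_eq_none_iff.1 h⟩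
    rw [length_replicate, ofMarked_cons_U_append_D (staysAbove_replicate_F m)
      (by simp [IsBalanced, count_replicate]), if_pos rfl]
  · rw [ofMarked_cons_U_append_D hE hEb, if_neg (by omega), if_neg (by omega),
      show E.length + 2 + j - E.length - 2 = j by omega]
    simpa using congrArg (fun x => U :: (E ++ D :: x)) (ih Q j false h)
  · obtain ⟨hQb, hQ, hQh⟩ := (isHumpMarked_of_toMarked_eq_some hr h).1
    rw [ofMarked_cons_U_append_D hQ hQb, if_neg (by omega),
      if_pos (Nat.succ_le_of_lt hQh.lt_length), Nat.add_sub_cancel]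
    simpa using congrArg (fun x => U :: (E ++ D :: x)) (ih Q j true h)

theorem mirrorIf_ofMarked_of_toMarked_eq_some {w : List SStep} (hw : IsBalanced w)
    {P : List SStep} {i : ℕ} {ε : Bool} (h : toMarked w = some ((P, i), ε)) :
    mirrorIf ε (ofMarked P i) = w := by
  induction hn : w.length using Nat.strong_induction_on generalizing w P i ε with
  | _ n ih =>
  have hU : ∀ t, (U :: t).length = n → IsBalanced (U :: t) → ∀ {P i ε},
      toMarked (U :: t) = some ((P, i), ε) → mirrorIf ε (ofMarked P i) = U :: t := by
    intro t ht hb P i ε h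
    obtain ⟨E, r, rfl, hE, hEb, hr⟩ := exists_firstReturn hb
    rw [toMarked_cons_U_append_D hE hEb] at h
    obtain ⟨hPi, rfl⟩ := Prod.mk.inj (Option.some.inj h)
    have := ofMarked_assemble hE hEb hr fun Q j ε hQ =>
      ih r.length (by simp at ht; omega) hr hQ rfl
    rwa [hPi] at this
  rcases w with _ | ⟨_ | _ | _, t⟩
  · simp [toMarked] at h
  · exact hU t hn hw h
  · rw [toMarked_cons_F] at h
    obtain ⟨⟨⟨P', i'⟩, ε'⟩, h', hx⟩ := Option.map_eq_some_iff.1 h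
    simp only [Prod.mk.injEq] at hx
    obtain ⟨⟨rfl, rfl⟩, rfl⟩ := hx
    rw [ofMarked_cons_F, Nat.add_sub_cancel, mirrorIf_cons_F,
      ih t.length (by simp at hn; omega) (by simpa [IsBalanced] using hw) h' rfl]
  · have e : U :: mirror t = mirror (D :: t) := by simp [reflect]
    rw [toMarked_cons_D] at h
    obtain ⟨⟨x, ε'⟩, h', hx⟩ := Option.map_eq_some_iff.1 h
    simp only [Prod.mk.injEq] at hx
    obtain ⟨rfl, rfl⟩ := hx
    have := hU (mirror t) (by simpa using hn) (by rw [e]; exact isBalanced_mirror.2 hw) h'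
    rw [mirrorIf_not, this, e, mirror_mirror]

theorem toMarked_ofMarked {P : List SStep} {i : ℕ} (hP : IsHumpMarked P i) :
    IsBalanced (ofMarked P i) ∧ toMarked (ofMarked P i) = some ((P, i), false) := by
  induction hn : P.length using Nat.strong_induction_on generalizing P i with
  | _ n ih =>
  obtain ⟨hb, hs, hh⟩ := hP
  rcases P with _ | ⟨_ | _ | _, P⟩
  · exact absurd hh.lt_length (by simp)
  · obtain ⟨C, T, rfl, hC, hCb, hTb⟩ := exists_firstReturn hb
    have hT : StaysAbove 0 T := ((staysAbove_zero_cons_U_append_D hCb).1 hs).2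
    have hlen : C.length < n ∧ T.length < n := by simp at hn; omega
    rw [ofMarked_cons_U_append_D hC hCb]
    rcases hh.cases_of_cons_U_append_D hC hCb with
      ⟨rfl, hCF⟩ | ⟨j, rfl, hj⟩ | ⟨j, rfl, hj⟩
    · rw [if_pos rfl, toMarked_cons_U_append_D hT hTb, toMarked_eq_none_iff.2 hCF]
      exact ⟨hTb.cons_U_append_D hCb, by simp [assemble, ← hCF]⟩
    · obtain ⟨hxb, hx⟩ := ih C.length hlen.1 ⟨hCb, hC, hj⟩ rfl
      rw [if_neg (by omega), if_pos (by have := hj.lt_length; omega), Nat.add_sub_cancel,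
        toMarked_cons_U_append_D hT hTb, toMarked_mirror, hx]
      exact ⟨hTb.cons_U_append_D (isBalanced_mirror.2 hxb), rfl⟩
    · obtain ⟨hyb, hy⟩ := ih T.length hlen.2 ⟨hTb, hT, hj⟩ rfl
      rw [if_neg (by omega), if_neg (by omega), show C.length + 2 + j - C.length - 2 = j by omega,
        toMarked_cons_U_append_D hC hCb, hy]
      exact ⟨hCb.cons_U_append_D hyb, rfl⟩
  · obtain ⟨j, rfl, hj⟩ := hh.of_cons_F
    obtain ⟨hxb, hx⟩ := ih P.length (by simp at hn; omega)
      ⟨by simpa [IsBalanced] using hb, staysAbove_cons_F.1 hs, hj⟩ rfl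
    rw [ofMarked_cons_F, Nat.add_sub_cancel, toMarked_cons_F, hx]
    exact ⟨by simpa [IsBalanced] using hxb, rfl⟩
  · exact absurd hs not_staysAbove_zero_cons_D

theorem toMarked_mirrorIf_ofMarked {P : List SStep} {i : ℕ} (hP : IsHumpMarked P i) (ε : Bool) :
    IsBalanced (mirrorIf ε (ofMarked P i)) ∧
      toMarked (mirrorIf ε (ofMarked P i)) = some ((P, i), ε) := by
  obtain ⟨hb, h⟩ := toMarked_ofMarked hP
  cases ε
  · exact ⟨hb, h⟩
  · exact ⟨isBalanced_mirror.2 hb, by simp [toMarked_mirror, h]⟩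

theorem finite_superSchroeder (n : ℕ) : Finite {w : List SStep // IsSuperSchroeder n w} := by
  refine Set.Finite.to_subtype <|
    (List.finite_length_le SStep (2 * n)).subset fun w ⟨hUF, hUD⟩ => ?_
  have := length_eq_count_add w
  show w.length ≤ 2 * n
  omega

def ofMarkedSuper (n : ℕ) :
    Option ({p : List SStep × ℕ // IsSchroeder n p.1 ∧ IsHumpAt p.1 p.2} × Bool) →
      {w : List SStep // IsSuperSchroeder n w}
  | none => ⟨replicate n F, by simp [IsSuperSchroeder, count_replicate]⟩
  | some (⟨(P, i), hP⟩, ε) => ⟨mirrorIf ε (ofMarked P i), by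
      obtain ⟨hm, hn⟩ := isSchroeder_and_isHumpAt_iff.1 hP
      obtain ⟨hb, h⟩ := toMarked_mirrorIf_ofMarked hm ε
      exact isSuperSchroeder_iff.2
        ⟨hb, (isHumpMarked_of_toMarked_eq_some hb h).2.symm.trans hn⟩⟩

theorem toMarked_ofMarkedSuper (n : ℕ)
    (o : Option ({p : List SStep × ℕ // IsSchroeder n p.1 ∧ IsHumpAt p.1 p.2} × Bool)) :
    toMarked (ofMarkedSuper n o).1 = o.map fun x => (x.1.1, x.2) := by
  rcases o with _ | ⟨⟨⟨P, i⟩, hP⟩, ε⟩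
  · exact toMarked_eq_none_iff.2 (by simp [ofMarkedSuper])
  · exact (toMarked_mirrorIf_ofMarked (isSchroeder_and_isHumpAt_iff.1 hP).1 ε).2

theorem bijective_ofMarkedSuper (n : ℕ) : Function.Bijective (ofMarkedSuper n) := by
  refine ⟨fun o o' h => ?_, fun w => ?_⟩
  · have := congrArg (fun w => toMarked w.1) h
    simp only [toMarked_ofMarkedSuper] at this
    exact Option.map_injective (fun ⟨⟨_, _⟩, _⟩ ⟨⟨_, _⟩, _⟩ hxy => by simp_all) this
  obtain ⟨w, hw⟩ := w
  obtain ⟨hb, hn⟩ := isSuperSchroeder_iff.1 hw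
  rcases h : toMarked w with _ | ⟨⟨P, i⟩, ε⟩
  · have hF := toMarked_eq_none_iff.1 h
    have hlen : w.length = n := by
      rw [← hn, hF]
      simp [order, count_replicate]
    refine ⟨none, Subtype.ext ?_⟩
    show replicate n F = w
    rw [← hlen, ← hF]
  · obtain ⟨hP, ho⟩ := isHumpMarked_of_toMarked_eq_some hb h
    exact ⟨some (⟨(P, i), isSchroeder_and_isHumpAt_iff.2 ⟨hP, ho.trans hn⟩⟩, ε),
      Subtype.ext (mirrorIf_ofMarked_of_toMarked_eq_some hb h)⟩

end Schroeder

theorem superSchroeder_eq_two_mul_humps_add_one (n : ℕ) :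
    Nat.card {w : List SStep // IsSuperSchroeder n w} =
      2 * Nat.card {p : List SStep × ℕ //
        IsSchroeder n p.1 ∧ IsHumpAt p.1 p.2} + 1 := by
  have hbij := Schroeder.bijective_ofMarkedSuper n
  have := Schroeder.finite_superSchroeder n
  have : Finite (Option _) := Finite.of_injective _ hbij.1
  have : Finite {p : List SStep × ℕ // IsSchroeder n p.1 ∧ IsHumpAt p.1 p.2} :=
    Finite.of_injective (fun x => some (x, true)) fun x y h => by simpa using h
  rw [← Nat.card_eq_of_bijective _ hbij, Finite.card_option, Nat.card_prod,
    Nat.card_eq_fintype_card (α := Bool), Fintype.card_bool, mul_comm]
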